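/- QC for the ReLU map in structured matrix form: let φ(x) = max(0, x) componentwise on ℝᵈ, y = φ(x). For any diagonal-plus-Laplacian matrix T = ∑ᵢ λᵢeᵢeᵢᵀ + ∑_{i<j} λᵢⱼ(eᵢ−eⱼ)(eᵢ−eⱼ)ᵀ with λᵢⱼ ≥ 0, any ν, η ∈ ℝᵈ with ν ≥ 0, η ≥ 0, the vector [x; y; 1] satisfies [x; y; 1]ᵀ Q [x; y; 1] ≥ 0 where Q = [[0, T, −ν], [T, −2T, ν+η], [−νᵀ, νᵀ+ηᵀ, 0]]. -/

import Mathlib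

/-!
For symmetric `T` the quadratic form equals `2 (x - y)ᵀ T y + 2 (νᵀ (y - x) + ηᵀ y)`. For the
ReLU, `(xᵢ - yᵢ) yᵢ = 0` kills the diagonal part of `T`, and
`((xᵢ - yᵢ) - (xⱼ - yⱼ)) (yᵢ - yⱼ) ≥ 0` (ReLU is monotone with slope at most one) makes every
Laplacian term nonnegative; the linear part is nonnegative because `y ≥ x` and `y ≥ 0`.
-/

open Matrix

theorem max_zero_sub_mul_max_zero (a : ℝ) : (a - max 0 a) * max 0 a = 0 := by
  rcases le_total a 0 with h | h <;> simp [h]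

theorem max_zero_slope_nonneg (a b : ℝ) :
    0 ≤ ((a - max 0 a) - (b - max 0 b)) * (max 0 a - max 0 b) := by
  rcases le_total a 0 with ha | ha <;> rcases le_total b 0 with hb | hb <;>
    simp only [ha, hb, max_eq_left, max_eq_right] <;> nlinarith

namespace Matrix

variable {ι R : Type*} [Fintype ι] [LinearOrder ι] [CommRing R]

def diagPlusLaplacian (lam : ι → R) (lam' : ι → ι → R) : Matrix ι ι R :=
  (∑ i, lam i • vecMulVec (Pi.single i 1) (Pi.single i 1))
    + ∑ i, ∑ j, if i < j then
        lam' i j • vecMulVec (Pi.single i 1 - Pi.single j 1) (Pi.single i 1 - Pi.single j 1)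
      else 0

theorem isSymm_diagPlusLaplacian (lam : ι → R) (lam' : ι → ι → R) :
    (diagPlusLaplacian lam lam').IsSymm := by
  simp only [IsSymm, diagPlusLaplacian, transpose_add, transpose_sum, transpose_smul,
    transpose_vecMulVec, apply_ite transpose, transpose_zero]

theorem dotProduct_diagPlusLaplacian_mulVec (lam : ι → R) (lam' : ι → ι → R) (a b : ι → R) :
    a ⬝ᵥ (diagPlusLaplacian lam lam' *ᵥ b) = (∑ i, lam i * (a i * b i)) +
      ∑ i, ∑ j, if i < j then lam' i j * ((a i - a j) * (b i - b j)) else 0 := by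
  simp only [diagPlusLaplacian, add_mulVec, sum_mulVec, apply_ite (· *ᵥ b), smul_mulVec,
    zero_mulVec, dotProduct_add, dotProduct_sum, apply_ite (a ⬝ᵥ ·), dotProduct_smul,
    dotProduct_zero, vecMulVec_mulVec]
  simp [dotProduct_sub, sub_dotProduct, mul_comm]

theorem sumElim_dotProduct_fromBlocks_mulVec_sumElim {n : Type*} [Fintype n]
    {T : Matrix n n R} (hT : T.IsSymm) (c : n ⊕ n → R) (x y : n → R) :
    Sum.elim (Sum.elim x y) (fun _ => (1 : R)) ⬝ᵥ
      (fromBlocks (fromBlocks 0 T T (-(2 : R) • T)) (replicateCol Unit c)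
        (replicateRow Unit c) 0 *ᵥ Sum.elim (Sum.elim x y) (fun _ => (1 : R))) =
      2 * ((x - y) ⬝ᵥ (T *ᵥ y)) + 2 * (Sum.elim x y ⬝ᵥ c) := by
  have hyx : y ⬝ᵥ (T *ᵥ x) = x ⬝ᵥ (T *ᵥ y) := by
    rw [dotProduct_mulVec, dotProduct_comm, ← mulVec_transpose, hT]
  have hcol : replicateCol Unit c *ᵥ (fun _ => (1 : R)) = c := by
    ext i; simp [mulVec, dotProduct]
  have hrow : (fun _ => (1 : R)) ⬝ᵥ (replicateRow Unit c *ᵥ Sum.elim x y) =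
      Sum.elim x y ⬝ᵥ c := by
    simp [dotProduct_comm c, replicateRow_mulVec_eq_const]
  simp only [fromBlocks_mulVec, sumElim_dotProduct_sumElim, Sum.elim_comp_inl, Sum.elim_comp_inr,
    zero_mulVec, zero_add, add_zero, hcol, hrow, dotProduct_add, smul_mulVec, dotProduct_smul,
    sub_dotProduct, hyx, smul_eq_mul]
  ring

end Matrix

theorem dotProduct_diagPlusLaplacian_mulVec_relu_nonneg {ι : Type*} [Fintype ι] [LinearOrder ι]
    (lam : ι → ℝ) {lam' : ι → ι → ℝ} (hlam' : ∀ i j, 0 ≤ lam' i j) (x : ι → ℝ) :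
    0 ≤ (x - fun i => max 0 (x i)) ⬝ᵥ (diagPlusLaplacian lam lam' *ᵥ fun i => max 0 (x i)) := by
  rw [dotProduct_diagPlusLaplacian_mulVec]
  simp only [Pi.sub_apply, max_zero_sub_mul_max_zero, mul_zero, Finset.sum_const_zero, zero_add]
  refine Finset.sum_nonneg fun i _ => Finset.sum_nonneg fun j _ => ?_
  split_ifs
  · exact mul_nonneg (hlam' i j) (max_zero_slope_nonneg (x i) (x j))
  · rfl

theorem sumElim_dotProduct_relu_nonneg {ι : Type*} [Fintype ι] {ν η : ι → ℝ}
    (hν : ∀ i, 0 ≤ ν i) (hη : ∀ i, 0 ≤ η i) (x : ι → ℝ) :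
    0 ≤ Sum.elim x (fun i => max 0 (x i)) ⬝ᵥ Sum.elim (-ν) (ν + η) := by
  rw [sumElim_dotProduct_sumElim, dotProduct_neg, ← sub_eq_neg_add, sub_nonneg]
  refine Finset.sum_le_sum fun i _ => ?_
  calc x i * ν i ≤ max 0 (x i) * ν i := mul_le_mul_of_nonneg_right (le_max_right 0 (x i)) (hν i)
    _ ≤ max 0 (x i) * (ν i + η i) :=
      mul_le_mul_of_nonneg_left (le_add_of_nonneg_right (hη i)) (le_max_left 0 (x i))

theorem relu_qc_structured (d : ℕ) (x y : Fin d → ℝ) (hy : ∀ i, y i = max 0 (x i))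
    (lam : Fin d → ℝ) (lam' : Fin d → Fin d → ℝ) (hlam' : ∀ i j, 0 ≤ lam' i j)
    (ν η : Fin d → ℝ) (hν : ∀ i, 0 ≤ ν i) (hη : ∀ i, 0 ≤ η i)
    (e : Fin d → (Fin d → ℝ)) (he : ∀ i, e i = Pi.single i 1)
    (T : Matrix (Fin d) (Fin d) ℝ)
    (hT : T = (∑ i, lam i • Matrix.vecMulVec (e i) (e i))
      + ∑ i, ∑ j, (if i < j then lam' i j • Matrix.vecMulVec (e i - e j) (e i - e j) else 0))
    (Q : Matrix ((Fin d ⊕ Fin d) ⊕ Unit) ((Fin d ⊕ Fin d) ⊕ Unit) ℝ)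
    (hQ : Q = Matrix.fromBlocks
      (Matrix.fromBlocks 0 T T (-(2 : ℝ) • T))
      (Matrix.replicateCol Unit (Sum.elim (-ν) (ν + η)))
      (Matrix.replicateRow Unit (Sum.elim (-ν) (ν + η)))
      0) :
    0 ≤ (Sum.elim (Sum.elim x y) (fun _ => (1 : ℝ))) ⬝ᵥ
      (Q *ᵥ (Sum.elim (Sum.elim x y) (fun _ => (1 : ℝ)))) := by
  obtain rfl : y = fun i => max 0 (x i) := funext hy
  obtain rfl : e = fun i => Pi.single i 1 := funext he
  obtain rfl : T = diagPlusLaplacian lam lam' := hT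
  rw [hQ, sumElim_dotProduct_fromBlocks_mulVec_sumElim (isSymm_diagPlusLaplacian lam lam')]
  have hquad := dotProduct_diagPlusLaplacian_mulVec_relu_nonneg lam hlam' x
  have hlin := sumElim_dotProduct_relu_nonneg hν hη x
  positivity
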